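/- The series ∑_{n=1}^{∞} a(n)/n^{3/2} diverges (its partial sums tend to +∞). -/

import Mathlib

/-!
Write `n = d * m` with `d ≤ m ≤ 2 * d`: then `d` is a small divisor of `n` contributing
`d / n ^ (3/2) ≥ 1 / (8 d²)`. For each `d` there are `d + 1` such `m`, so `d` accounts for at
least `1 / (8 d)`, and all `n = d * m` with `d ≤ √(N/2)` are at most `N`. Hence the `N`-th partial
sum dominates an eighth of the harmonic sum up to `√(N/2)`, which diverges.
-/

open Filter

/-- The sum of the small divisors of `n`, i.e. the divisors `d` of `n` with `d^2 ≤ n`. -/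
def smallDivSum (n : ℕ) : ℕ := ∑ d ∈ n.divisors.filter (fun d => d ^ 2 ≤ n), d

open Finset

def smallDivisors (n : ℕ) : Finset ℕ := n.divisors.filter (fun d => d ^ 2 ≤ n)

lemma smallDivSum_eq_sum_smallDivisors (n : ℕ) : smallDivSum n = ∑ d ∈ smallDivisors n, d := rfl

lemma tendsto_sum_Icc_inv_atTop : Tendsto (fun n : ℕ => ∑ i ∈ Icc 1 n, (i : ℝ)⁻¹) atTop atTop := by
  refine tendsto_atTop_mono (fun n => ?_) (Real.tendsto_log_atTop.comp
    (tendsto_natCast_atTop_atTop.comp (tendsto_add_atTop_nat 1)))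
  simpa [harmonic_eq_sum_Icc] using log_add_one_le_harmonic n

lemma tendsto_sqrt_div_two_atTop : Tendsto (fun n : ℕ => Nat.sqrt (n / 2)) atTop atTop :=
  (tendsto_atTop_atTop.2 fun b => ⟨b * b, fun _ => Nat.le_sqrt.2⟩).comp
    (Nat.tendsto_div_const_atTop two_ne_zero)

lemma sum_Icc_sum_Icc_mul_le_sum_Icc_sum_smallDivisors {f : ℕ → ℕ → ℝ} (hf : ∀ k d, 0 ≤ f k d)
    {D N : ℕ} (hDN : 2 * D ^ 2 ≤ N) :
    ∑ d ∈ Icc 1 D, ∑ m ∈ Icc d (2 * d), f (d * m) d ≤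
      ∑ k ∈ Icc 1 N, ∑ d ∈ smallDivisors k, f k d := by
  set e : (_ : ℕ) × ℕ → (_ : ℕ) × ℕ := fun p => ⟨p.1 * p.2, p.1⟩
  have he : Set.InjOn e ((Icc 1 D).sigma fun d => Icc d (2 * d)) := by
    rintro ⟨d, m⟩ hp ⟨d', m'⟩ - h
    simp only [e, Sigma.mk.injEq, heq_eq_eq] at h
    obtain ⟨hdm, rfl⟩ := h
    simp only [coe_sigma, Set.mem_sigma_iff, coe_Icc, Set.mem_Icc] at hp
    rw [Nat.eq_of_mul_eq_mul_left (by omega) hdm]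
  have hsub : ((Icc 1 D).sigma fun d => Icc d (2 * d)).image e ⊆
      (Icc 1 N).sigma smallDivisors := by
    intro q hq
    obtain ⟨⟨d, m⟩, hp, rfl⟩ := mem_image.1 hq
    simp only [mem_sigma, mem_Icc] at hp
    obtain ⟨⟨hd, hdD⟩, hdm, hm⟩ := hp
    have hpos : 0 < d * m := Nat.mul_pos (by omega) (by omega)
    have hle : d * m ≤ N := by nlinarith
    simp only [e, smallDivisors, mem_sigma, mem_Icc, mem_filter, Nat.mem_divisors]
    exact ⟨⟨hpos, hle⟩, ⟨dvd_mul_right d m, hpos.ne'⟩, by nlinarith⟩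
  rw [sum_sigma', sum_sigma']
  calc _ = ∑ p ∈ ((Icc 1 D).sigma fun d => Icc d (2 * d)).image e, f p.1 p.2 := (sum_image he).symm
    _ ≤ _ := sum_le_sum_of_subset_of_nonneg hsub fun p _ _ => hf _ _

lemma inv_le_div_mul_rpow_three_halves {x y : ℝ} (hx : 0 < x) (hxy : x ≤ y) (hy : y ≤ 2 * x) :
    (8 * x ^ 2)⁻¹ ≤ x / (x * y) ^ ((3 : ℝ) / 2) := by
  have hxy₀ : 0 < x * y := mul_pos hx (hx.trans_le hxy)
  have hbound : (x * y) ^ ((3 : ℝ) / 2) ≤ (2 * x) ^ 3 :=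
    calc (x * y) ^ ((3 : ℝ) / 2) ≤ ((2 * x) ^ 2) ^ ((3 : ℝ) / 2) :=
          Real.rpow_le_rpow hxy₀.le (by nlinarith) (by norm_num)
      _ = (2 * x) ^ 3 := by
          rw [← Real.rpow_natCast, ← Real.rpow_mul (by positivity)]
          norm_num
  calc (8 * x ^ 2)⁻¹ = x / (2 * x) ^ 3 := by field_simp; ring
    _ ≤ x / (x * y) ^ ((3 : ℝ) / 2) :=
      div_le_div_of_nonneg_left hx.le (Real.rpow_pos_of_pos hxy₀ _) hbound

lemma inv_le_sum_Icc_div_mul_rpow_three_halves {d : ℕ} (hd : 0 < d) :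
    (8 * (d : ℝ))⁻¹ ≤ ∑ m ∈ Icc d (2 * d), (d : ℝ) / ((d * m : ℕ) : ℝ) ^ ((3 : ℝ) / 2) := by
  have hdR : (0 : ℝ) < d := by exact_mod_cast hd
  have hterm : ∀ m ∈ Icc d (2 * d),
      (8 * (d : ℝ) ^ 2)⁻¹ ≤ (d : ℝ) / ((d * m : ℕ) : ℝ) ^ ((3 : ℝ) / 2) := by
    intro m hm
    rw [mem_Icc] at hm
    push_cast
    exact inv_le_div_mul_rpow_three_halves hdR (by exact_mod_cast hm.1) (by exact_mod_cast hm.2)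
  calc (8 * (d : ℝ))⁻¹ = d * (8 * (d : ℝ) ^ 2)⁻¹ := by field_simp
    _ ≤ #(Icc d (2 * d)) * (8 * (d : ℝ) ^ 2)⁻¹ := by
      gcongr
      exact_mod_cast (Nat.card_Icc d (2 * d)).symm ▸ (by omega : d ≤ 2 * d + 1 - d)
    _ ≤ _ := by simpa using card_nsmul_le_sum _ _ _ hterm

lemma inv_mul_sum_Icc_inv_le_sum_smallDivSum_div_rpow (N : ℕ) :
    (8 : ℝ)⁻¹ * ∑ d ∈ Icc 1 (Nat.sqrt (N / 2)), (d : ℝ)⁻¹ ≤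
      ∑ k ∈ Icc 1 N, (smallDivSum k : ℝ) / (k : ℝ) ^ ((3 : ℝ) / 2) := by
  have hN : 2 * Nat.sqrt (N / 2) ^ 2 ≤ N := by
    have := Nat.sqrt_le' (N / 2)
    omega
  calc (8 : ℝ)⁻¹ * ∑ d ∈ Icc 1 (Nat.sqrt (N / 2)), (d : ℝ)⁻¹
      = ∑ d ∈ Icc 1 (Nat.sqrt (N / 2)), (8 * (d : ℝ))⁻¹ := by simp only [mul_sum, mul_inv]
    _ ≤ ∑ d ∈ Icc 1 (Nat.sqrt (N / 2)), ∑ m ∈ Icc d (2 * d),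
          (d : ℝ) / ((d * m : ℕ) : ℝ) ^ ((3 : ℝ) / 2) :=
      sum_le_sum fun d hd => inv_le_sum_Icc_div_mul_rpow_three_halves (mem_Icc.1 hd).1
    _ ≤ ∑ k ∈ Icc 1 N, ∑ d ∈ smallDivisors k,
          (d : ℝ) / (k : ℝ) ^ ((3 : ℝ) / 2) :=
      sum_Icc_sum_Icc_mul_le_sum_Icc_sum_smallDivisors
        (f := fun k d => (d : ℝ) / (k : ℝ) ^ ((3 : ℝ) / 2)) (fun _ _ => by positivity) hN
    _ = _ := by simp only [smallDivSum_eq_sum_smallDivisors, Nat.cast_sum, sum_div]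

theorem smallDivSum_dirichlet_diverges_at_three_halves :
    Tendsto (fun n : ℕ => ∑ k ∈ Finset.Icc 1 n, (smallDivSum k : ℝ) / (k : ℝ) ^ ((3 : ℝ) / 2))
      atTop atTop :=
  tendsto_atTop_mono inv_mul_sum_Icc_inv_le_sum_smallDivSum_div_rpow
    ((tendsto_sum_Icc_inv_atTop.comp tendsto_sqrt_div_two_atTop).const_mul_atTop (by norm_num))
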